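/- arXiv:0904.1428 — 4 statements merged into one kernel-verified Lean document; each statement's English description precedes it below -/
import Mathlib

section
/- Let dc : 𝔤 → V* be a linear map satisfying dc([ξ,η]) = ξ·dc(η) − η·dc(ξ) for all ξ,η ∈ 𝔤. Let ξ(t) ∈ 𝔤, b(t) ∈ V be continuous curves and a(t) ∈ V*, v(t) ∈ V, m(t) ∈ 𝔤* differentiable curves on an interval, satisfying the advection equation a′ = −ξa − dc(ξ) and the equation v′ = b − ξv. Then m satisfies the affine Euler–Poincaré equation m′ = ad*_ξ m + b⋄a − dc^T(b) on the interval if and only if the shifted momentum m̃ := m − v⋄a + dc^T(v) satisfies m̃′ = ad*_ξ m̃ on the interval. -/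
/- Setup: 𝔤 and V are finite-dimensional real (normed) vector spaces; the Lie
bracket of 𝔤 is given by the bilinear map `br` (antisymmetric, Jacobi) and the
representation of 𝔤 on V by `ρ`. The duals are realized as the continuous
duals `g →L[ℝ] ℝ`, `V →L[ℝ] ℝ` (in finite dimensions every linear functional
is continuous). The dual action is `⟨ξa, v⟩ = −⟨a, ξv⟩`, the diamond operation
`⟨v⋄a, ξ⟩ = −⟨ξa, v⟩`, the coadjoint operator `⟨ad*_ξ μ, η⟩ = ⟨μ, [ξ,η]⟩`, and
`⟨dc^T(v), ξ⟩ = ⟨dc(ξ), v⟩`. -/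

variable {g V : Type*}
  [NormedAddCommGroup g] [NormedSpace ℝ g] [FiniteDimensional ℝ g]
  [NormedAddCommGroup V] [NormedSpace ℝ V] [FiniteDimensional ℝ V]

/-- The induced action of `𝔤` on the dual `V*`: `⟨ξa, v⟩ = −⟨a, ξv⟩`. -/
def dAct (ρ : g →ₗ[ℝ] V →L[ℝ] V) (ξ : g) (a : V →L[ℝ] ℝ) : V →L[ℝ] ℝ :=
  -(a.comp (ρ ξ))

/-- The diamond operation `⟨v⋄a, ξ⟩ = −⟨ξa, v⟩ = ⟨a, ξv⟩`. -/
noncomputable def diamond (ρ : g →ₗ[ℝ] V →L[ℝ] V) (v : V) (a : V →L[ℝ] ℝ) :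
    g →L[ℝ] ℝ :=
  LinearMap.toContinuousLinearMap
    { toFun := fun ξ => a (ρ ξ v)
      map_add' := by intro x y; simp
      map_smul' := by intro c x; simp }

/-- The coadjoint operator `⟨ad*_ξ μ, η⟩ = ⟨μ, [ξ,η]⟩`. -/
noncomputable def coad (br : g →ₗ[ℝ] g →ₗ[ℝ] g) (ξ : g) (μ : g →L[ℝ] ℝ) :
    g →L[ℝ] ℝ :=
  μ.comp (LinearMap.toContinuousLinearMap (br ξ))

/-- The transpose `⟨dc^T(v), ξ⟩ = ⟨dc(ξ), v⟩`. -/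
noncomputable def dcT (dc : g →ₗ[ℝ] (V →L[ℝ] ℝ)) (v : V) : g →L[ℝ] ℝ :=
  LinearMap.toContinuousLinearMap
    { toFun := fun ξ => dc ξ v
      map_add' := by intro x y; simp
      map_smul' := by intro c x; simp }

/-!
Put `n := v⋄a - dc^T(v)`, so that the shifted momentum is `m - n`. Differentiating `n` along
`v' = b - ξv` and `a' = -ξa - dc(ξ)`, the terms in `ξv` and `ξa` recombine into `ad*_ξ n`: those
of `v⋄a` by equivariance of `⋄`, those of `dc^T(v)` by the cocycle identity for `dc`. Hence
`n' = ad*_ξ n + b⋄a - dc^T(b)`, and since `ad*_ξ` is linear, `m` solves the affine Euler–Poincaré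
equation exactly when `m - n` solves `m̃' = ad*_ξ m̃`.
-/

section Derivatives

variable {𝕜 E F G : Type*} [NontriviallyNormedField 𝕜] [CompleteSpace 𝕜]
  [NormedAddCommGroup E] [NormedSpace 𝕜 E] [FiniteDimensional 𝕜 E]
  [NormedAddCommGroup F] [NormedSpace 𝕜 F] [FiniteDimensional 𝕜 F]
  [NormedAddCommGroup G] [NormedSpace 𝕜 G]
  {u : 𝕜 → E} {w : 𝕜 → F} {u' : E} {w' : F} {t : 𝕜}

theorem LinearMap.hasDerivAt_comp (L : E →ₗ[𝕜] G) (hu : HasDerivAt u u' t) :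
    HasDerivAt (fun s => L (u s)) (L u') t :=
  L.toContinuousLinearMap.hasFDerivAt.comp_hasDerivAt t hu

theorem LinearMap.hasDerivAt_apply₂ (B : E →ₗ[𝕜] F →ₗ[𝕜] G) (hu : HasDerivAt u u' t)
    (hw : HasDerivAt w w' t) :
    HasDerivAt (fun s => B (u s) (w s)) (B u' (w t) + B (u t) w') t :=
  (B.toContinuousBilinearMap.hasFDerivAt.comp_hasDerivAt t hu).clm_apply hw

end Derivatives

theorem hasDerivAt_sub_iff {𝕜 E : Type*} [NontriviallyNormedField 𝕜] [NormedAddCommGroup E]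
    [NormedSpace 𝕜 E] {m n : 𝕜 → E} {m' n' : E} {t : 𝕜} (hn : HasDerivAt n n' t) :
    HasDerivAt m m' t ↔ HasDerivAt (fun s => m s - n s) (m' - n') t :=
  ⟨fun hm => hm.sub hn, fun h => by simpa [Pi.add_def] using h.add hn⟩

section Algebra

omit [FiniteDimensional ℝ V]

@[simp]
lemma diamond_apply (ρ : g →ₗ[ℝ] V →L[ℝ] V) (v : V) (a : V →L[ℝ] ℝ) (ξ : g) :
    diamond ρ v a ξ = a (ρ ξ v) := rfl

@[simp]
lemma dcT_apply (dc : g →ₗ[ℝ] (V →L[ℝ] ℝ)) (v : V) (ξ : g) : dcT dc v ξ = dc ξ v := rfl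

@[simp]
lemma coad_apply (br : g →ₗ[ℝ] g →ₗ[ℝ] g) (ξ : g) (μ : g →L[ℝ] ℝ) (η : g) :
    coad br ξ μ η = μ (br ξ η) := rfl

lemma coad_sub (br : g →ₗ[ℝ] g →ₗ[ℝ] g) (ξ : g) (μ ν : g →L[ℝ] ℝ) :
    coad br ξ (μ - ν) = coad br ξ μ - coad br ξ ν :=
  ContinuousLinearMap.sub_comp _ _ _

noncomputable def diamondₗ (ρ : g →ₗ[ℝ] V →L[ℝ] V) :
    V →ₗ[ℝ] (V →L[ℝ] ℝ) →ₗ[ℝ] (g →L[ℝ] ℝ) :=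
  LinearMap.mk₂ ℝ (diamond ρ)
    (fun _ _ _ => by ext; simp) (fun _ _ _ => by ext; simp)
    (fun _ _ _ => by ext; simp) (fun _ _ _ => by ext; simp)

@[simp]
lemma diamondₗ_apply (ρ : g →ₗ[ℝ] V →L[ℝ] V) (v : V) (a : V →L[ℝ] ℝ) :
    diamondₗ ρ v a = diamond ρ v a := rfl

noncomputable def dcTₗ (dc : g →ₗ[ℝ] (V →L[ℝ] ℝ)) : V →ₗ[ℝ] (g →L[ℝ] ℝ) where
  toFun := dcT dc
  map_add' _ _ := by ext; simp
  map_smul' _ _ := by ext; simp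

@[simp]
lemma dcTₗ_apply (dc : g →ₗ[ℝ] (V →L[ℝ] ℝ)) (v : V) : dcTₗ dc v = dcT dc v := rfl

/-- `⋄` is `𝔤`-equivariant: `(ξv)⋄a + v⋄(ξa) = -ad*_ξ (v⋄a)`. -/
theorem diamond_act_add_diamond_dAct (br : g →ₗ[ℝ] g →ₗ[ℝ] g) (ρ : g →ₗ[ℝ] V →L[ℝ] V)
    (hρ : ∀ x y : g, ρ (br x y) = (ρ x).comp (ρ y) - (ρ y).comp (ρ x))
    (ξ : g) (v : V) (a : V →L[ℝ] ℝ) :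
    diamond ρ (ρ ξ v) a + diamond ρ v (dAct ρ ξ a) = -coad br ξ (diamond ρ v a) := by
  ext η
  simp [dAct, hρ]
  ring

/-- The cocycle identity for `dc`, transposed: `dc^T(ξv) - v⋄dc(ξ) = -ad*_ξ (dc^T v)`. -/
theorem dcT_act_sub_diamond_dc (br : g →ₗ[ℝ] g →ₗ[ℝ] g) (ρ : g →ₗ[ℝ] V →L[ℝ] V)
    (dc : g →ₗ[ℝ] (V →L[ℝ] ℝ))
    (hdc : ∀ x y : g, dc (br x y) = dAct ρ x (dc y) - dAct ρ y (dc x))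
    (ξ : g) (v : V) :
    dcT dc (ρ ξ v) - diamond ρ v (dc ξ) = -coad br ξ (dcT dc v) := by
  ext η
  simp [dAct, hdc]
  ring
end Algebra

theorem hasDerivAt_diamond_sub_dcT (br : g →ₗ[ℝ] g →ₗ[ℝ] g) (ρ : g →ₗ[ℝ] V →L[ℝ] V)
    (hρ : ∀ x y : g, ρ (br x y) = (ρ x).comp (ρ y) - (ρ y).comp (ρ x))
    (dc : g →ₗ[ℝ] (V →L[ℝ] ℝ))
    (hdc : ∀ x y : g, dc (br x y) = dAct ρ x (dc y) - dAct ρ y (dc x))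
    {a : ℝ → (V →L[ℝ] ℝ)} {v : ℝ → V} {ξ : g} {b : V} {t : ℝ}
    (ha : HasDerivAt a (-(dAct ρ ξ (a t)) - dc ξ) t) (hv : HasDerivAt v (b - ρ ξ (v t)) t) :
    HasDerivAt (fun s => diamond ρ (v s) (a s) - dcT dc (v s))
      (coad br ξ (diamond ρ (v t) (a t) - dcT dc (v t)) + diamond ρ b (a t) - dcT dc b) t := by
  refine (((diamondₗ ρ).hasDerivAt_apply₂ hv ha).sub ((dcTₗ dc).hasDerivAt_comp hv)).congr_deriv ?_
  have hequiv := diamond_act_add_diamond_dAct br ρ hρ ξ (v t) (a t)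
  have hcocycle := dcT_act_sub_diamond_dc br ρ dc hdc ξ (v t)
  simp only [map_sub, map_neg, LinearMap.sub_apply, diamondₗ_apply, dcTₗ_apply]
  rw [coad_sub]
  linear_combination (norm := module) hcocycle - hequiv

theorem affine_EP_shifted_momentum_general
    (br : g →ₗ[ℝ] g →ₗ[ℝ] g)
    (ρ : g →ₗ[ℝ] V →L[ℝ] V)
    (hρ : ∀ x y : g, ρ (br x y) = (ρ x).comp (ρ y) - (ρ y).comp (ρ x))
    (dc : g →ₗ[ℝ] (V →L[ℝ] ℝ))
    (hdc : ∀ x y : g, dc (br x y) = dAct ρ x (dc y) - dAct ρ y (dc x))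
    (t₀ t₁ : ℝ)
    (ξ : ℝ → g) (b : ℝ → V)
    (a : ℝ → (V →L[ℝ] ℝ)) (v : ℝ → V) (m : ℝ → (g →L[ℝ] ℝ))
    (ha : ∀ t ∈ Set.Icc t₀ t₁,
      HasDerivAt a (-(dAct ρ (ξ t) (a t)) - dc (ξ t)) t)
    (hv : ∀ t ∈ Set.Icc t₀ t₁,
      HasDerivAt v (b t - ρ (ξ t) (v t)) t) :
    (∀ t ∈ Set.Icc t₀ t₁,
        HasDerivAt m
          (coad br (ξ t) (m t) + diamond ρ (b t) (a t) - dcT dc (b t)) t) ↔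
      (∀ t ∈ Set.Icc t₀ t₁,
        HasDerivAt (fun s => m s - diamond ρ (v s) (a s) + dcT dc (v s))
          (coad br (ξ t) (m t - diamond ρ (v t) (a t) + dcT dc (v t))) t) := by
  refine forall₂_congr fun t ht => ?_
  have hshift := hasDerivAt_diamond_sub_dcT br ρ hρ dc hdc (ha t ht) (hv t ht)
  simp only [sub_add]
  rw [hasDerivAt_sub_iff hshift, coad_sub br (ξ t) (m t)]
  congr! 1
  abel

/-- Given the advection equation `a′ = −ξa − dc(ξ)` and the
equation `v′ = b − ξv`, the curve `m` satisfies the affine Euler–Poincaré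
equation `m′ = ad*_ξ m + b⋄a − dc^T(b)` iff the shifted momentum
`m̃ := m − v⋄a + dc^T(v)` satisfies `m̃′ = ad*_ξ m̃`. -/
theorem affine_EP_shifted_momentum
    (br : g →ₗ[ℝ] g →ₗ[ℝ] g)
    (hbr : ∀ x : g, br x x = 0)
    (hjac : ∀ x y z : g, br x (br y z) + br y (br z x) + br z (br x y) = 0)
    (ρ : g →ₗ[ℝ] V →L[ℝ] V)
    (hρ : ∀ x y : g, ρ (br x y) = (ρ x).comp (ρ y) - (ρ y).comp (ρ x))
    (dc : g →ₗ[ℝ] (V →L[ℝ] ℝ))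
    (hdc : ∀ x y : g, dc (br x y) = dAct ρ x (dc y) - dAct ρ y (dc x))
    (t₀ t₁ : ℝ)
    (ξ : ℝ → g) (b : ℝ → V)
    (hξ : ContinuousOn ξ (Set.Icc t₀ t₁)) (hb : ContinuousOn b (Set.Icc t₀ t₁))
    (a : ℝ → (V →L[ℝ] ℝ)) (v : ℝ → V) (m : ℝ → (g →L[ℝ] ℝ))
    (ha : ∀ t ∈ Set.Icc t₀ t₁,
      HasDerivAt a (-(dAct ρ (ξ t) (a t)) - dc (ξ t)) t)
    (hv : ∀ t ∈ Set.Icc t₀ t₁,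
      HasDerivAt v (b t - ρ (ξ t) (v t)) t)
    (hm : ∀ t ∈ Set.Icc t₀ t₁, DifferentiableAt ℝ m t) :
    (∀ t ∈ Set.Icc t₀ t₁,
        HasDerivAt m
          (coad br (ξ t) (m t) + diamond ρ (b t) (a t) - dcT dc (b t)) t) ↔
      (∀ t ∈ Set.Icc t₀ t₁,
        HasDerivAt (fun s => m s - diamond ρ (v s) (a s) + dcT dc (v s))
          (coad br (ξ t) (m t - diamond ρ (v t) (a t) + dcT dc (v t))) t) :=
  affine_EP_shifted_momentum_general br ρ hρ dc hdc t₀ t₁ ξ b a v m ha hv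
end

section
/- (Affine Euler–Poincaré principle, equivalence of the constrained variational principle and the affine Euler–Poincaré equation.) Let l : 𝔤 × V* → ℝ be C¹, dc : 𝔤 → V* linear, ξ : [t₀,t₁] → 𝔤 and a : [t₀,t₁] → V* continuous curves such that t ↦ D₁l(ξ(t),a(t)) ∈ 𝔤* is C¹. Then the following are equivalent: (i) for every C¹ curve η : [t₀,t₁] → 𝔤 with η(t₀) = η(t₁) = 0, ∫_{t₀}^{t₁} [ ⟨D₁l(ξ(t),a(t)), η′(t) + [ξ(t),η(t)]⟩ − ⟨η(t)·a(t) + dc(η(t)), D₂l(ξ(t),a(t))⟩ ] dt = 0; (ii) for all t ∈ [t₀,t₁], (d/dt) D₁l(ξ(t),a(t)) = ad*_{ξ(t)} D₁l(ξ(t),a(t)) + D₂l(ξ(t),a(t)) ⋄ a(t) − dc^T( D₂l(ξ(t),a(t)) ). -/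
/- 𝔤 and V are finite-dimensional real normed spaces, the Lie bracket of 𝔤 is the bilinear map
`br` and the representation of 𝔤 on V is `ρ`. Duals are the continuous duals `g →L[ℝ] ℝ` and
`V →L[ℝ] ℝ`. The partial derivatives `D₁l(ξ,a) ∈ 𝔤*` and `D₂l(ξ,a) ∈ V` (identifying V** ≅ V)
of `l` are encoded by the hypothesis `hD`. -/

variable {g V : Type*}
  [NormedAddCommGroup g] [NormedSpace ℝ g] [FiniteDimensional ℝ g]
  [NormedAddCommGroup V] [NormedSpace ℝ V] [FiniteDimensional ℝ V]

/-! Writing `μ = D₁l(ξ,a)`, `v = D₂l(ξ,a)` and `F = ad*_ξ μ + v ⋄ a − dcᵀ v`, the integrand of the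
first variation is pointwise `⟨F, η⟩ + ⟨μ, η′⟩`. Since `η` vanishes at the endpoints, integrating
`⟨μ, η′⟩` by parts turns the first variation into `∫ ⟨F − μ′, η⟩`. Under (ii) this integrand
vanishes; conversely, (i) makes `F − μ′` vanish by the fundamental lemma of the calculus of
variations, tested with `η = φ • w` for scalar bump functions `φ`. The curve `v` is continuous
because `l` is C¹, which makes all integrands continuous. -/

open Set MeasureTheory
open scoped ContDiff

theorem continuous_of_forall_continuous_dual_apply {X : Type*} [TopologicalSpace X]
    {f : X → V} (hf : ∀ φ : V →L[ℝ] ℝ, Continuous fun x => φ (f x)) : Continuous f := by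
  let e := (Module.finBasis ℝ V).equivFunL
  have he : Continuous fun x => e (f x) :=
    continuous_pi fun i => hf ((ContinuousLinearMap.proj i).comp e.toContinuousLinearMap)
  exact (e.symm.continuous.comp he).congr fun x => e.symm_apply_apply (f x)

theorem ContDiff.continuous_snd_partial_of_hasFDerivAt {E : Type*} [NormedAddCommGroup E]
    [NormedSpace ℝ E] {l : E × (V →L[ℝ] ℝ) → ℝ} (hl : ContDiff ℝ 1 l)
    {D1 : E × (V →L[ℝ] ℝ) → (E →L[ℝ] ℝ)} {D2 : E × (V →L[ℝ] ℝ) → V}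
    (hD : ∀ p : E × (V →L[ℝ] ℝ),
      HasFDerivAt l
        ((D1 p).comp (ContinuousLinearMap.fst ℝ E (V →L[ℝ] ℝ)) +
          (ContinuousLinearMap.apply ℝ ℝ (D2 p)).comp
            (ContinuousLinearMap.snd ℝ E (V →L[ℝ] ℝ))) p) :
    Continuous D2 := by
  refine continuous_of_forall_continuous_dual_apply fun φ => ?_
  have hφ : ∀ p, φ (D2 p) = fderiv ℝ l p (0, φ) := fun p => by simp [(hD p).fderiv]
  simpa only [hφ] using (hl.continuous_fderiv one_ne_zero).clm_apply continuous_const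

theorem eqOn_zero_of_forall_intervalIntegral_mul_eq_zero {f : ℝ → ℝ} {a b : ℝ} (hab : a < b)
    (hf : ContinuousOn f (Icc a b))
    (h : ∀ φ : ℝ → ℝ, ContDiff ℝ ∞ φ → tsupport φ ⊆ Ioo a b →
      ∫ t in a..b, φ t * f t = 0) :
    EqOn f 0 (Icc a b) := by
  have hae : ∀ᵐ t, t ∈ Ioo a b → f t = 0 := by
    refine isOpen_Ioo.ae_eq_zero_of_integral_contDiff_smul_eq_zero
      ((hf.mono Ioo_subset_Icc_self).locallyIntegrableOn measurableSet_Ioo)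
      fun φ hφ _ hφs => ?_
    have hφ0 : ∀ t ∉ Ioc a b, φ t • f t = 0 := fun t ht => by
      rw [image_eq_zero_of_notMem_tsupport fun h' => ht (Ioo_subset_Ioc_self (hφs h')),
        zero_smul]
    rw [← setIntegral_eq_integral_of_forall_compl_eq_zero hφ0,
      ← intervalIntegral.integral_of_le hab.le]
    exact h φ hφ hφs
  refine Measure.eqOn_Icc_of_ae_eq volume hab.ne ?_ hf continuousOn_const
  rw [← Measure.restrict_congr_set Ioo_ae_eq_Icc]
  exact (ae_restrict_iff' measurableSet_Ioo).2 hae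

theorem eqOn_zero_of_forall_intervalIntegral_apply_eq_zero {E : Type*} [NormedAddCommGroup E]
    [NormedSpace ℝ E] {G : ℝ → E →L[ℝ] ℝ} {a b : ℝ} (hab : a < b)
    (hG : ContinuousOn G (Icc a b))
    (h : ∀ η : ℝ → E, ContDiffOn ℝ 1 η (Icc a b) → η a = 0 → η b = 0 →
      ∫ t in a..b, G t (η t) = 0) :
    EqOn G 0 (Icc a b) := by
  intro t ht
  ext v
  refine eqOn_zero_of_forall_intervalIntegral_mul_eq_zero hab (hG.clm_apply continuousOn_const)
    (fun φ hφ hφs => ?_) ht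
  have hφ_end : ∀ s ∉ Ioo a b, φ s • v = 0 := fun s hs => by
    rw [image_eq_zero_of_notMem_tsupport fun h' => hs (hφs h'), zero_smul]
  simpa using h (fun s => φ s • v) ((hφ.of_le (mod_cast le_top)).smul contDiff_const).contDiffOn
    (hφ_end a (by simp)) (hφ_end b (by simp))

theorem intervalIntegral.integral_derivWithin_apply_add_apply_derivWithin {E : Type*}
    [NormedAddCommGroup E] [NormedSpace ℝ E] {a b : ℝ} (hab : a < b)
    {μ : ℝ → E →L[ℝ] ℝ} {η : ℝ → E}
    (hμ : ContDiffOn ℝ 1 μ (Icc a b)) (hη : ContDiffOn ℝ 1 η (Icc a b)) :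
    ∫ t in a..b, derivWithin μ (Icc a b) t (η t) + μ t (derivWithin η (Icc a b) t)
      = μ b (η b) - μ a (η a) := by
  have hμ' := hμ.continuousOn_derivWithin (uniqueDiffOn_Icc hab) le_rfl
  have hη' := hη.continuousOn_derivWithin (uniqueDiffOn_Icc hab) le_rfl
  refine integral_eq_sub_of_hasDeriv_right_of_le hab.le
    (hμ.continuousOn.clm_apply hη.continuousOn) (fun t ht => ?_) ?_
  · have hnhds : Icc a b ∈ nhds t := Icc_mem_nhds ht.1 ht.2
    have hμt : HasDerivAt μ (derivWithin μ (Icc a b) t) t :=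
      ((hμ.differentiableOn one_ne_zero) t (Ioo_subset_Icc_self ht)).hasDerivWithinAt.hasDerivAt
        hnhds
    have hηt : HasDerivAt η (derivWithin η (Icc a b) t) t :=
      ((hη.differentiableOn one_ne_zero) t (Ioo_subset_Icc_self ht)).hasDerivWithinAt.hasDerivAt
        hnhds
    exact (hμt.clm_apply hηt).hasDerivWithinAt
  · exact ((hμ'.clm_apply hη.continuousOn).add
      (hμ.continuousOn.clm_apply hη')).intervalIntegrable_of_Icc hab.le

noncomputable def affineEulerPoincareRhs (br : g →ₗ[ℝ] g →ₗ[ℝ] g) (ρ : g →ₗ[ℝ] V →L[ℝ] V)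
    (dc : g →ₗ[ℝ] (V →L[ℝ] ℝ)) (ξ : g) (a : V →L[ℝ] ℝ) (μ : g →L[ℝ] ℝ) (v : V) : g →L[ℝ] ℝ :=
  coad br ξ μ + diamond ρ v a - dcT dc v

section AffineEulerPoincareRhs

variable (br : g →ₗ[ℝ] g →ₗ[ℝ] g) (ρ : g →ₗ[ℝ] V →L[ℝ] V) (dc : g →ₗ[ℝ] (V →L[ℝ] ℝ))

omit [FiniteDimensional ℝ V]

@[simp]
theorem affineEulerPoincareRhs_apply (ξ : g) (a : V →L[ℝ] ℝ) (μ : g →L[ℝ] ℝ) (v : V) (ζ : g) :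
    affineEulerPoincareRhs br ρ dc ξ a μ v ζ = μ (br ξ ζ) + a (ρ ζ v) - dc ζ v :=
  rfl

theorem first_variation_integrand_eq (ξ : g) (a : V →L[ℝ] ℝ) (μ : g →L[ℝ] ℝ) (v : V)
    (η η' : g) :
    μ (η' + br ξ η) - (dAct ρ η a + dc η) v
      = affineEulerPoincareRhs br ρ dc ξ a μ v η + μ η' := by
  simp only [affineEulerPoincareRhs_apply, dAct, map_add, add_apply, neg_apply,
    ContinuousLinearMap.comp_apply]
  ring

theorem ContinuousOn.affineEulerPoincareRhs {X : Type*} [TopologicalSpace X] {s : Set X}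
    {ξ : X → g} {a : X → V →L[ℝ] ℝ} {μ : X → g →L[ℝ] ℝ} {v : X → V}
    (hξ : ContinuousOn ξ s) (ha : ContinuousOn a s) (hμ : ContinuousOn μ s)
    (hv : ContinuousOn v s) :
    ContinuousOn (fun x => affineEulerPoincareRhs br ρ dc (ξ x) (a x) (μ x) (v x)) s := by
  refine continuousOn_clm_apply.2 fun ζ => ?_
  simp only [affineEulerPoincareRhs_apply]
  have hbr : ContinuousOn (fun x => br (ξ x) ζ) s :=
    (br.flip ζ).continuous_of_finiteDimensional.comp_continuousOn hξ
  exact ((hμ.clm_apply hbr).add (ha.clm_apply ((ρ ζ).continuous.comp_continuousOn hv))).sub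
    ((dc ζ).continuous.comp_continuousOn hv)

theorem integral_first_variation_eq {a b : ℝ} (hab : a < b) {ξ : ℝ → g}
    {α : ℝ → V →L[ℝ] ℝ} {μ : ℝ → g →L[ℝ] ℝ} {v : ℝ → V} (hμ : ContDiffOn ℝ 1 μ (Icc a b))
    (hF : ContinuousOn (fun t => affineEulerPoincareRhs br ρ dc (ξ t) (α t) (μ t) (v t))
      (Icc a b))
    (η : ℝ → g) (hη : ContDiffOn ℝ 1 η (Icc a b)) (hηa : η a = 0) (hηb : η b = 0) :
    ∫ t in a..b, μ t (derivWithin η (Icc a b) t + br (ξ t) (η t))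
        - (dAct ρ (η t) (α t) + dc (η t)) (v t)
      = ∫ t in a..b, (affineEulerPoincareRhs br ρ dc (ξ t) (α t) (μ t) (v t)
          - derivWithin μ (Icc a b) t) (η t) := by
  have hparts := intervalIntegral.integral_derivWithin_apply_add_apply_derivWithin hab hμ hη
  rw [hηa, hηb, map_zero, map_zero, sub_zero] at hparts
  have hμ' := hμ.continuousOn_derivWithin (uniqueDiffOn_Icc hab) le_rfl
  have hη' := hη.continuousOn_derivWithin (uniqueDiffOn_Icc hab) le_rfl
  have hFη := (hF.clm_apply hη.continuousOn).intervalIntegrable_of_Icc (μ := volume) hab.le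
  have hμ'η := (hμ'.clm_apply hη.continuousOn).intervalIntegrable_of_Icc (μ := volume) hab.le
  have hμη' := (hμ.continuousOn.clm_apply hη').intervalIntegrable_of_Icc (μ := volume) hab.le
  simp only [first_variation_integrand_eq, sub_apply]
  rw [intervalIntegral.integral_add hFη hμη', intervalIntegral.integral_sub hFη hμ'η]
  rw [intervalIntegral.integral_add hμ'η hμη'] at hparts
  linarith

end AffineEulerPoincareRhs

theorem affine_euler_poincare_principle_general
    (br : g →ₗ[ℝ] g →ₗ[ℝ] g)
    (ρ : g →ₗ[ℝ] V →L[ℝ] V)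
    (dc : g →ₗ[ℝ] (V →L[ℝ] ℝ))
    (l : g × (V →L[ℝ] ℝ) → ℝ) (hl : ContDiff ℝ 1 l)
    (D1 : g × (V →L[ℝ] ℝ) → (g →L[ℝ] ℝ)) (D2 : g × (V →L[ℝ] ℝ) → V)
    (hD : ∀ p : g × (V →L[ℝ] ℝ),
      HasFDerivAt l
        ((D1 p).comp (ContinuousLinearMap.fst ℝ g (V →L[ℝ] ℝ)) +
          (ContinuousLinearMap.apply ℝ ℝ (D2 p)).comp
            (ContinuousLinearMap.snd ℝ g (V →L[ℝ] ℝ))) p)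
    (t₀ t₁ : ℝ) (ht : t₀ < t₁)
    (ξ : ℝ → g) (a : ℝ → (V →L[ℝ] ℝ))
    (hξ : ContinuousOn ξ (Set.Icc t₀ t₁)) (ha : ContinuousOn a (Set.Icc t₀ t₁))
    (hD1 : ContDiffOn ℝ 1 (fun t => D1 (ξ t, a t)) (Set.Icc t₀ t₁)) :
    (∀ η : ℝ → g, ContDiffOn ℝ 1 η (Set.Icc t₀ t₁) → η t₀ = 0 → η t₁ = 0 →
        (∫ t in t₀..t₁,
          ((D1 (ξ t, a t)) (derivWithin η (Set.Icc t₀ t₁) t + br (ξ t) (η t))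
            - (dAct ρ (η t) (a t) + dc (η t)) (D2 (ξ t, a t)))) = 0) ↔
      (∀ t ∈ Set.Icc t₀ t₁,
        HasDerivWithinAt (fun s => D1 (ξ s, a s))
          (coad br (ξ t) (D1 (ξ t, a t)) + diamond ρ (D2 (ξ t, a t)) (a t)
            - dcT dc (D2 (ξ t, a t)))
          (Set.Icc t₀ t₁) t) := by
  have hF : ContinuousOn
      (fun t => affineEulerPoincareRhs br ρ dc (ξ t) (a t) (D1 (ξ t, a t)) (D2 (ξ t, a t)))
      (Icc t₀ t₁) :=
    hξ.affineEulerPoincareRhs br ρ dc ha hD1.continuousOn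
      ((hl.continuous_snd_partial_of_hasFDerivAt hD).comp_continuousOn (hξ.prodMk ha))
  have hvar := integral_first_variation_eq br ρ dc ht hD1 hF
  constructor
  · intro hcrit t ht'
    have hEP := eqOn_zero_of_forall_intervalIntegral_apply_eq_zero ht
      (hF.sub (hD1.continuousOn_derivWithin (uniqueDiffOn_Icc ht) le_rfl))
      (fun η hη hη₀ hη₁ => (hvar η hη hη₀ hη₁).symm.trans (hcrit η hη hη₀ hη₁)) ht'
    rw [Pi.zero_apply, Pi.sub_apply, sub_eq_zero] at hEP
    have hderiv := ((hD1.differentiableOn one_ne_zero) t ht').hasDerivWithinAt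
    rwa [← hEP] at hderiv
  · intro hEP η hη hη₀ hη₁
    rw [hvar η hη hη₀ hη₁]
    refine (intervalIntegral.integral_congr fun t ht' => ?_).trans intervalIntegral.integral_zero
    rw [uIcc_of_le ht.le] at ht'
    simp [(hEP t ht').derivWithin (uniqueDiffOn_Icc ht t ht'), affineEulerPoincareRhs]

/-- **Affine Euler–Poincaré principle.** For a C¹ Lagrangian
`l : 𝔤 × V* → ℝ`, a linear map `dc : 𝔤 → V*`, and continuous curves `ξ, a`
such that `t ↦ D₁l(ξ(t),a(t))` is C¹, the constrained variational principle
(i) holds for all variations `δξ = η′ + [ξ,η]`, `δa = −ηa − dc(η)` with `η`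
vanishing at the endpoints iff (ii) the affine Euler–Poincaré equation
`(d/dt) D₁l = ad*_ξ D₁l + D₂l ⋄ a − dc^T(D₂l)` holds on `[t₀,t₁]`. -/
theorem affine_euler_poincare_principle
    (br : g →ₗ[ℝ] g →ₗ[ℝ] g)
    (hbr : ∀ x : g, br x x = 0)
    (hjac : ∀ x y z : g, br x (br y z) + br y (br z x) + br z (br x y) = 0)
    (ρ : g →ₗ[ℝ] V →L[ℝ] V)
    (hρ : ∀ x y : g, ρ (br x y) = (ρ x).comp (ρ y) - (ρ y).comp (ρ x))
    (dc : g →ₗ[ℝ] (V →L[ℝ] ℝ))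
    (l : g × (V →L[ℝ] ℝ) → ℝ) (hl : ContDiff ℝ 1 l)
    (D1 : g × (V →L[ℝ] ℝ) → (g →L[ℝ] ℝ)) (D2 : g × (V →L[ℝ] ℝ) → V)
    (hD : ∀ p : g × (V →L[ℝ] ℝ),
      HasFDerivAt l
        ((D1 p).comp (ContinuousLinearMap.fst ℝ g (V →L[ℝ] ℝ)) +
          (ContinuousLinearMap.apply ℝ ℝ (D2 p)).comp
            (ContinuousLinearMap.snd ℝ g (V →L[ℝ] ℝ))) p)
    (t₀ t₁ : ℝ) (ht : t₀ < t₁)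
    (ξ : ℝ → g) (a : ℝ → (V →L[ℝ] ℝ))
    (hξ : ContinuousOn ξ (Set.Icc t₀ t₁)) (ha : ContinuousOn a (Set.Icc t₀ t₁))
    (hD1 : ContDiffOn ℝ 1 (fun t => D1 (ξ t, a t)) (Set.Icc t₀ t₁)) :
    (∀ η : ℝ → g, ContDiffOn ℝ 1 η (Set.Icc t₀ t₁) → η t₀ = 0 → η t₁ = 0 →
        (∫ t in t₀..t₁,
          ((D1 (ξ t, a t)) (derivWithin η (Set.Icc t₀ t₁) t + br (ξ t) (η t))
            - (dAct ρ (η t) (a t) + dc (η t)) (D2 (ξ t, a t)))) = 0) ↔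
      (∀ t ∈ Set.Icc t₀ t₁,
        HasDerivWithinAt (fun s => D1 (ξ s, a s))
          (coad br (ξ t) (D1 (ξ t, a t)) + diamond ρ (D2 (ξ t, a t)) (a t)
            - dcT dc (D2 (ξ t, a t)))
          (Set.Icc t₀ t₁) t) :=
  affine_euler_poincare_principle_general br ρ dc l hl D1 D2 hD t₀ t₁ ht ξ a hξ ha hD1
end

section
/- (Clebsch-constrained variational principle for the affine Euler–Poincaré equations.) Let l : 𝔤 × V* → ℝ be C¹ and dc : 𝔤 → V* a linear map satisfying dc([ξ,η]) = ξ·dc(η) − η·dc(ξ). Let ξ : [t₀,t₁] → 𝔤 be continuous and a : [t₀,t₁] → V*, v : [t₀,t₁] → V be C¹ curves such that t ↦ D₁l(ξ(t),a(t)) is C¹. Then the following are equivalent: (i) for all C¹ curves η : [t₀,t₁] → 𝔤, δa : [t₀,t₁] → V*, δv : [t₀,t₁] → V vanishing at both endpoints, setting δξ := η′ + [ξ,η], one has ∫_{t₀}^{t₁} [ ⟨D₁l(ξ,a), δξ⟩ + ⟨δa, D₂l(ξ,a)⟩ + ⟨(δa)′ + (δξ)·a + ξ·(δa) + dc(δξ),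 v⟩ + ⟨a′ + ξ·a + dc(ξ), δv⟩ ] dt = 0; (ii) on [t₀,t₁] the three equations hold: a′ + ξa + dc(ξ) = 0; v′ + ξv = D₂l(ξ,a); and (d/dt) D₁l(ξ,a) = ad*_ξ D₁l(ξ,a) + D₂l(ξ,a) ⋄ a − dc^T( D₂l(ξ,a) ). -/
/- Setup: 𝔤 and V are finite-dimensional real (normed) vector spaces; the Lie
bracket of 𝔤 is the bilinear map `br` (antisymmetric, Jacobi) and the
representation of 𝔤 on V is `ρ`. Duals are the continuous duals `g →L[ℝ] ℝ`
and `V →L[ℝ] ℝ`. The dual action is `⟨ξa, v⟩ = −⟨a, ξv⟩`, the diamond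
operation `⟨v⋄a, ξ⟩ = −⟨ξa, v⟩`, the coadjoint operator
`⟨ad*_ξ μ, η⟩ = ⟨μ, [ξ,η]⟩`, and `⟨dc^T(v), ξ⟩ = ⟨dc(ξ), v⟩`. The partial
derivatives `D₁l(ξ,a) ∈ 𝔤*` and `D₂l(ξ,a) ∈ V` (identifying V** ≅ V) of the
C¹ Lagrangian `l` are encoded by the hypothesis `hD`. The integrand in (i) is
the first variation of the Clebsch action `∫ [l(ξ,a) + ⟨a′ + ξa + dc(ξ), v⟩]`
under `δξ = η′ + [ξ,η]` and free variations `δa`, `δv`. -/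

variable {g V : Type*}
  [NormedAddCommGroup g] [NormedSpace ℝ g] [FiniteDimensional ℝ g]
  [NormedAddCommGroup V] [NormedSpace ℝ V] [FiniteDimensional ℝ V]

/-
Write `μ = D₁l(ξ,a)` and `ν = μ - v ⋄ a + dcᵀ v`. Pointwise, the integrand of (i) equals
`d/dt [ν(η) + δa(v)] + (ad*_ξ ν - ν′)(η) + δa(D₂l(ξ,a) - v′ - ξv) + (a′ + ξa + dc(ξ))(δv)`,
so after integrating the total derivative away, the fundamental lemma of the calculus of
variations (applied to one variation at a time) shows that (i) holds iff `ν′ = ad*_ξ ν`,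
`v′ + ξv = D₂l(ξ,a)` and `a′ + ξa + dc(ξ) = 0`. Given the last two equations, the representation
property of `ρ` and the cocycle identity for `dc` turn `ν′ = ad*_ξ ν` into the affine
Euler–Poincaré equation for `μ`.
-/

open Set MeasureTheory
open scoped ContDiff

section VariationalCalculus

variable {t₀ t₁ : ℝ}

theorem eqOn_zero_of_integral_smooth_mul_eq_zero (ht : t₀ < t₁) {f : ℝ → ℝ}
    (hf : ContinuousOn f (Icc t₀ t₁))
    (h : ∀ φ : ℝ → ℝ, ContDiff ℝ ∞ φ → HasCompactSupport φ → tsupport φ ⊆ Ioo t₀ t₁ →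
      ∫ t in t₀..t₁, φ t * f t = 0) :
    EqOn f 0 (Icc t₀ t₁) := by
  have hae : ∀ᵐ t, t ∈ Ioo t₀ t₁ → f t = 0 :=
    isOpen_Ioo.ae_eq_zero_of_integral_contDiff_smul_eq_zero
      ((hf.mono Ioo_subset_Icc_self).locallyIntegrableOn measurableSet_Ioo)
      fun φ hφ hφc hφU => by
        rw [← h φ hφ hφc hφU, intervalIntegral.integral_of_le ht.le,
          ← setIntegral_eq_integral_of_forall_compl_eq_zero fun t ht => by
            rw [image_eq_zero_of_notMem_tsupport (notMem_subset hφU ht), zero_smul]]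
        exact setIntegral_congr_set Ioo_ae_eq_Ioc
  have hIoo : EqOn f 0 (Ioo t₀ t₁) :=
    Measure.eqOn_open_of_ae_eq ((ae_restrict_iff' measurableSet_Ioo).2 hae) isOpen_Ioo
      (hf.mono Ioo_subset_Icc_self) continuousOn_const
  exact hIoo.of_subset_closure hf continuousOn_const Ioo_subset_Icc_self (closure_Ioo ht.ne).ge

theorem eqOn_zero_of_integral_apply_eq_zero {F : Type*} [NormedAddCommGroup F]
    [NormedSpace ℝ F] (ht : t₀ < t₁) {E : ℝ → F →L[ℝ] ℝ} (hE : ContinuousOn E (Icc t₀ t₁))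
    (h : ∀ φ : ℝ → F, ContDiffOn ℝ 1 φ (Icc t₀ t₁) → φ t₀ = 0 → φ t₁ = 0 →
      ∫ t in t₀..t₁, E t (φ t) = 0) :
    EqOn E 0 (Icc t₀ t₁) := by
  intro t htI
  ext w
  refine eqOn_zero_of_integral_smooth_mul_eq_zero ht (hE.clm_apply continuousOn_const)
    (fun φ hφ _ hφU => ?_) htI
  have hφ₀ : ∀ t ∉ Ioo t₀ t₁, φ t = 0 := fun t ht =>
    image_eq_zero_of_notMem_tsupport (notMem_subset hφU ht)
  simpa using h (fun t => φ t • w)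
    ((hφ.of_le (by exact_mod_cast le_top)).smul contDiff_const).contDiffOn
    (by simp [hφ₀ t₀ (by simp)]) (by simp [hφ₀ t₁ (by simp)])

theorem forall_integral_apply_add_apply_add_apply_eq_zero_iff
    {F₁ F₂ F₃ : Type*} [NormedAddCommGroup F₁] [NormedSpace ℝ F₁] [NormedAddCommGroup F₂]
    [NormedSpace ℝ F₂] [NormedAddCommGroup F₃] [NormedSpace ℝ F₃] (ht : t₀ < t₁)
    {E₁ : ℝ → F₁ →L[ℝ] ℝ} {E₂ : ℝ → F₂ →L[ℝ] ℝ} {E₃ : ℝ → F₃ →L[ℝ] ℝ}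
    (hE₁ : ContinuousOn E₁ (Icc t₀ t₁)) (hE₂ : ContinuousOn E₂ (Icc t₀ t₁))
    (hE₃ : ContinuousOn E₃ (Icc t₀ t₁)) :
    (∀ (φ₁ : ℝ → F₁) (φ₂ : ℝ → F₂) (φ₃ : ℝ → F₃),
        ContDiffOn ℝ 1 φ₁ (Icc t₀ t₁) → ContDiffOn ℝ 1 φ₂ (Icc t₀ t₁) →
        ContDiffOn ℝ 1 φ₃ (Icc t₀ t₁) →
        φ₁ t₀ = 0 → φ₁ t₁ = 0 → φ₂ t₀ = 0 → φ₂ t₁ = 0 → φ₃ t₀ = 0 → φ₃ t₁ = 0 →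
        ∫ t in t₀..t₁, (E₁ t (φ₁ t) + E₂ t (φ₂ t) + E₃ t (φ₃ t)) = 0) ↔
      ∀ t ∈ Icc t₀ t₁, E₁ t = 0 ∧ E₂ t = 0 ∧ E₃ t = 0 := by
  constructor
  · intro h
    have h₁ := eqOn_zero_of_integral_apply_eq_zero ht hE₁ fun φ hφ h0 h1 => by
      simpa using h φ 0 0 hφ contDiffOn_const contDiffOn_const h0 h1 rfl rfl rfl rfl
    have h₂ := eqOn_zero_of_integral_apply_eq_zero ht hE₂ fun φ hφ h0 h1 => by
      simpa using h 0 φ 0 contDiffOn_const hφ contDiffOn_const rfl rfl h0 h1 rfl rfl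
    have h₃ := eqOn_zero_of_integral_apply_eq_zero ht hE₃ fun φ hφ h0 h1 => by
      simpa using h 0 0 φ contDiffOn_const contDiffOn_const hφ rfl rfl rfl rfl h0 h1
    exact fun t ht => ⟨h₁ ht, h₂ ht, h₃ ht⟩
  · intro h φ₁ φ₂ φ₃ _ _ _ _ _ _ _ _ _
    refine (intervalIntegral.integral_congr fun t ht' => ?_).trans intervalIntegral.integral_zero
    obtain ⟨h₁, h₂, h₃⟩ := h t (uIcc_of_le ht.le ▸ ht')
    simp [h₁, h₂, h₃]

theorem ContDiffOn.hasDerivWithinAt {F : Type*} [NormedAddCommGroup F] [NormedSpace ℝ F]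
    {f : ℝ → F} {s : Set ℝ} {t : ℝ} (hf : ContDiffOn ℝ 1 f s) (ht : t ∈ s) :
    HasDerivWithinAt f (derivWithin f s t) s t :=
  (hf.differentiableOn one_ne_zero t ht).hasDerivWithinAt

theorem integral_eq_sub_add_integral_of_hasDerivWithinAt (ht : t₀ ≤ t₁) {f g r G : ℝ → ℝ}
    (hG : ∀ t ∈ Icc t₀ t₁, HasDerivWithinAt G (g t) (Icc t₀ t₁) t)
    (hg : ContinuousOn g (Icc t₀ t₁)) (hr : ContinuousOn r (Icc t₀ t₁))
    (hf : ∀ t ∈ Icc t₀ t₁, f t = g t + r t) :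
    ∫ t in t₀..t₁, f t = G t₁ - G t₀ + ∫ t in t₀..t₁, r t := by
  rw [← uIcc_of_le ht] at hg hr hf
  rw [intervalIntegral.integral_congr hf, intervalIntegral.integral_add
    hg.intervalIntegrable hr.intervalIntegrable,
    intervalIntegral.integral_eq_sub_of_hasDerivAt_of_le ht
      (fun t ht => (hG t ht).continuousWithinAt)
      (fun t ht => (hG t (Ioo_subset_Icc_self ht)).hasDerivAt (Icc_mem_nhds ht.1 ht.2))
      hg.intervalIntegrable]

end VariationalCalculus

theorem ContinuousLinearMap.apply_eq_zero_iff {F : Type*} [NormedAddCommGroup F]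
    [NormedSpace ℝ F] {w : F} : ContinuousLinearMap.apply ℝ ℝ w = 0 ↔ w = 0 :=
  (NormedSpace.inclusionInDoubleDualLi ℝ).toLinearMap.map_eq_zero_iff
    (NormedSpace.inclusionInDoubleDualLi ℝ).injective

theorem continuous_of_hasFDerivAt_eq_add_apply_snd {E F : Type*} [NormedAddCommGroup E]
    [NormedSpace ℝ E] [NormedAddCommGroup F] [NormedSpace ℝ F] {l : E × (F →L[ℝ] ℝ) → ℝ}
    (hl : ContDiff ℝ 1 l) {D₁ : E × (F →L[ℝ] ℝ) → E →L[ℝ] ℝ} {D₂ : E × (F →L[ℝ] ℝ) → F}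
    (hD : ∀ p, HasFDerivAt l ((D₁ p).comp (ContinuousLinearMap.fst ℝ E (F →L[ℝ] ℝ)) +
      (ContinuousLinearMap.apply ℝ ℝ (D₂ p)).comp (ContinuousLinearMap.snd ℝ E (F →L[ℝ] ℝ))) p) :
    Continuous D₂ := by
  have h : NormedSpace.inclusionInDoubleDualLi ℝ ∘ D₂ =
      fun p => (fderiv ℝ l p).comp (ContinuousLinearMap.inr ℝ E (F →L[ℝ] ℝ)) := by
    ext p b
    simp only [Function.comp_apply, (hD p).fderiv, ContinuousLinearMap.add_comp, add_apply,
      ContinuousLinearMap.comp_apply, ContinuousLinearMap.inr_apply, ContinuousLinearMap.coe_fst',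
      map_zero, ContinuousLinearMap.coe_snd', ContinuousLinearMap.apply_apply, zero_add]
    rfl
  rw [(NormedSpace.inclusionInDoubleDualLi ℝ).isometry.isEmbedding.continuous_iff, h]
  exact (hl.continuous_fderiv one_ne_zero).clm_comp continuous_const

section Clebsch

variable (br : g →ₗ[ℝ] g →ₗ[ℝ] g) (ρ : g →ₗ[ℝ] V →L[ℝ] V) (dc : g →ₗ[ℝ] (V →L[ℝ] ℝ))

omit [FiniteDimensional ℝ V] in
theorem diamond_eq_comp (w : V) (α : V →L[ℝ] ℝ) :
    diamond ρ w α = α.comp ((LinearMap.toContinuousLinearMap ρ).flip w) := by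
  ext; rfl

omit [FiniteDimensional ℝ V] in
theorem dcT_eq_flip : dcT dc = (LinearMap.toContinuousLinearMap dc).flip := by
  ext; rfl

variable {s : Set ℝ} {t : ℝ}

omit [FiniteDimensional ℝ V] in
theorem HasDerivWithinAt.diamond {v : ℝ → V} {a : ℝ → V →L[ℝ] ℝ} {v' : V} {a' : V →L[ℝ] ℝ}
    (hv : HasDerivWithinAt v v' s t) (ha : HasDerivWithinAt a a' s t) :
    HasDerivWithinAt (fun t => diamond ρ (v t) (a t))
      (diamond ρ (v t) a' + diamond ρ v' (a t)) s t := by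
  simp only [diamond_eq_comp]
  exact ha.clm_comp
    ((LinearMap.toContinuousLinearMap ρ).flip.hasFDerivAt.comp_hasDerivWithinAt t hv)

omit [FiniteDimensional ℝ V] in
theorem ContDiffOn.diamond {n : WithTop ℕ∞} {v : ℝ → V} {a : ℝ → V →L[ℝ] ℝ}
    (hv : ContDiffOn ℝ n v s) (ha : ContDiffOn ℝ n a s) :
    ContDiffOn ℝ n (fun t => diamond ρ (v t) (a t)) s := by
  simp only [diamond_eq_comp]
  exact ha.clm_comp ((LinearMap.toContinuousLinearMap ρ).flip.contDiff.comp_contDiffOn hv)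

omit [FiniteDimensional ℝ V] in
theorem HasDerivWithinAt.dcT {v : ℝ → V} {v' : V} (hv : HasDerivWithinAt v v' s t) :
    HasDerivWithinAt (fun t => dcT dc (v t)) (dcT dc v') s t :=
  dcT_eq_flip dc ▸
    (LinearMap.toContinuousLinearMap dc).flip.hasFDerivAt.comp_hasDerivWithinAt t hv

omit [FiniteDimensional ℝ V] in
theorem ContDiffOn.dcT {n : WithTop ℕ∞} {v : ℝ → V} (hv : ContDiffOn ℝ n v s) :
    ContDiffOn ℝ n (fun t => dcT dc (v t)) s :=
  dcT_eq_flip dc ▸ (LinearMap.toContinuousLinearMap dc).flip.contDiff.comp_contDiffOn hv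

omit [FiniteDimensional ℝ V] in
theorem ContinuousOn.dAct {ξ : ℝ → g} {a : ℝ → V →L[ℝ] ℝ} (hξ : ContinuousOn ξ s)
    (ha : ContinuousOn a s) : ContinuousOn (fun t => dAct ρ (ξ t) (a t)) s :=
  (ha.clm_comp (ρ.continuous_of_finiteDimensional.comp_continuousOn hξ)).neg

theorem ContinuousOn.coad {ξ : ℝ → g} {ν : ℝ → g →L[ℝ] ℝ} (hξ : ContinuousOn ξ s)
    (hν : ContinuousOn ν s) : ContinuousOn (fun t => coad br (ξ t) (ν t)) s :=
  hν.clm_comp (br.toContinuousBilinearMap.continuous.comp_continuousOn hξ)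

noncomputable def clebschVariation (μ : ℝ → g →L[ℝ] ℝ) (D : ℝ → V) (ξ : ℝ → g)
    (a : ℝ → V →L[ℝ] ℝ) (v : ℝ → V) (s : Set ℝ) (η : ℝ → g) (δa : ℝ → V →L[ℝ] ℝ)
    (δv : ℝ → V) (t : ℝ) : ℝ :=
  let δξ := derivWithin η s t + br (ξ t) (η t)
  μ t δξ + δa t (D t) + (derivWithin δa s t + dAct ρ δξ (a t) + dAct ρ (ξ t) (δa t) + dc δξ) (v t)
    + (derivWithin a s t + dAct ρ (ξ t) (a t) + dc (ξ t)) (δv t)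

variable {br ρ dc}

omit [FiniteDimensional ℝ V] in
theorem clebschVariation_eq {μ ν : ℝ → g →L[ℝ] ℝ} {D : ℝ → V} {ξ η : ℝ → g}
    {a δa : ℝ → V →L[ℝ] ℝ} {v δv : ℝ → V}
    (hνμ : ν t = μ t - diamond ρ (v t) (a t) + dcT dc (v t)) (ν' : g →L[ℝ] ℝ) :
    clebschVariation br ρ dc μ D ξ a v s η δa δv t =
      (ν' (η t) + ν t (derivWithin η s t) + (derivWithin δa s t (v t) + δa t (derivWithin v s t)))
      + ((coad br (ξ t) (ν t) - ν') (η t)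
        + ContinuousLinearMap.apply ℝ ℝ (D t - (derivWithin v s t + ρ (ξ t) (v t))) (δa t)
        + (derivWithin a s t + dAct ρ (ξ t) (a t) + dc (ξ t)) (δv t)) := by
  simp only [clebschVariation, map_add, dAct, ContinuousLinearMap.comp_add, neg_add_rev,
    add_apply, neg_apply, ContinuousLinearMap.comp_apply, hνμ, diamond, dcT, sub_apply,
    LinearMap.coe_toContinuousLinearMap', LinearMap.coe_mk, AddHom.coe_mk, coad,
    ContinuousLinearMap.add_comp, ContinuousLinearMap.sub_comp, map_sub,
    ContinuousLinearMap.apply_apply]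
  ring

omit [FiniteDimensional ℝ V] in
theorem forall_integral_clebschVariation_eq_zero_iff {t₀ t₁ : ℝ} (ht : t₀ < t₁)
    {μ ν : ℝ → g →L[ℝ] ℝ} {D : ℝ → V} {ξ : ℝ → g} {a : ℝ → V →L[ℝ] ℝ} {v : ℝ → V}
    (hνμ : ∀ t, ν t = μ t - diamond ρ (v t) (a t) + dcT dc (v t))
    (hν : ContDiffOn ℝ 1 ν (Icc t₀ t₁)) (hD : ContinuousOn D (Icc t₀ t₁))
    (hξ : ContinuousOn ξ (Icc t₀ t₁)) (ha : ContDiffOn ℝ 1 a (Icc t₀ t₁))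
    (hv : ContDiffOn ℝ 1 v (Icc t₀ t₁)) :
    (∀ (η : ℝ → g) (δa : ℝ → V →L[ℝ] ℝ) (δv : ℝ → V),
        ContDiffOn ℝ 1 η (Icc t₀ t₁) → ContDiffOn ℝ 1 δa (Icc t₀ t₁) →
        ContDiffOn ℝ 1 δv (Icc t₀ t₁) →
        η t₀ = 0 → η t₁ = 0 → δa t₀ = 0 → δa t₁ = 0 → δv t₀ = 0 → δv t₁ = 0 →
        ∫ t in t₀..t₁, clebschVariation br ρ dc μ D ξ a v (Icc t₀ t₁) η δa δv t = 0) ↔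
      ∀ t ∈ Icc t₀ t₁, coad br (ξ t) (ν t) - derivWithin ν (Icc t₀ t₁) t = 0 ∧
        ContinuousLinearMap.apply ℝ ℝ (D t - (derivWithin v (Icc t₀ t₁) t + ρ (ξ t) (v t))) = 0 ∧
        derivWithin a (Icc t₀ t₁) t + dAct ρ (ξ t) (a t) + dc (ξ t) = 0 := by
  have hu : UniqueDiffOn ℝ (Icc t₀ t₁) := uniqueDiffOn_Icc ht
  have hE₁ : ContinuousOn (fun t => coad br (ξ t) (ν t) - derivWithin ν (Icc t₀ t₁) t)
      (Icc t₀ t₁) :=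
    (hξ.coad br hν.continuousOn).sub (hν.continuousOn_derivWithin hu le_rfl)
  have hE₂ : ContinuousOn (fun t => ContinuousLinearMap.apply ℝ ℝ
      (D t - (derivWithin v (Icc t₀ t₁) t + ρ (ξ t) (v t)))) (Icc t₀ t₁) :=
    (ContinuousLinearMap.apply ℝ ℝ).continuous.comp_continuousOn (hD.sub
      ((hv.continuousOn_derivWithin hu le_rfl).add
        ((ρ.continuous_of_finiteDimensional.comp_continuousOn hξ).clm_apply hv.continuousOn)))
  have hE₃ : ContinuousOn (fun t => derivWithin a (Icc t₀ t₁) t + dAct ρ (ξ t) (a t) + dc (ξ t))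
      (Icc t₀ t₁) :=
    ((ha.continuousOn_derivWithin hu le_rfl).add (hξ.dAct ρ ha.continuousOn)).add
      (dc.continuous_of_finiteDimensional.comp_continuousOn hξ)
  refine Iff.trans (forall₃_congr fun η δa δv => ?_)
    (forall_integral_apply_add_apply_add_apply_eq_zero_iff ht hE₁ hE₂ hE₃)
  refine forall_congr' fun hη => forall_congr' fun hδa => forall_congr' fun hδv => ?_
  rw [integral_eq_sub_add_integral_of_hasDerivWithinAt ht.le
    (G := fun t => ν t (η t) + δa t (v t))
    (fun t ht => ((hν.hasDerivWithinAt ht).clm_apply (hη.hasDerivWithinAt ht)).add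
      ((hδa.hasDerivWithinAt ht).clm_apply (hv.hasDerivWithinAt ht)))
    ((((hν.continuousOn_derivWithin hu le_rfl).clm_apply hη.continuousOn).add
      (hν.continuousOn.clm_apply (hη.continuousOn_derivWithin hu le_rfl))).add
      (((hδa.continuousOn_derivWithin hu le_rfl).clm_apply hv.continuousOn).add
        (hδa.continuousOn.clm_apply (hv.continuousOn_derivWithin hu le_rfl))))
    (((hE₁.clm_apply hη.continuousOn).add (hE₂.clm_apply hδa.continuousOn)).add
      (hE₃.clm_apply hδv.continuousOn))
    (fun t _ => clebschVariation_eq (hνμ t) (derivWithin ν (Icc t₀ t₁) t))]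
  refine forall_congr' fun h₀ => forall_congr' fun h₁ => forall_congr' fun h₂ =>
    forall_congr' fun h₃ => ?_
  simp [h₀, h₁, h₂, h₃]

omit [FiniteDimensional ℝ V] in
theorem hasDerivWithinAt_affineEulerPoincare_iff
    (hρ : ∀ x y : g, ρ (br x y) = (ρ x).comp (ρ y) - (ρ y).comp (ρ x))
    (hdc : ∀ x y : g, dc (br x y) = dAct ρ x (dc y) - dAct ρ y (dc x))
    {μ ν : ℝ → g →L[ℝ] ℝ} {a : ℝ → V →L[ℝ] ℝ} {v : ℝ → V} {a' : V →L[ℝ] ℝ} {v' D : V} {x : g}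
    (hνμ : ∀ t, ν t = μ t - diamond ρ (v t) (a t) + dcT dc (v t))
    (ha : HasDerivWithinAt a a' s t) (hv : HasDerivWithinAt v v' s t)
    (hadv : a' + dAct ρ x (a t) + dc x = 0) (hvD : v' + ρ x (v t) = D) :
    HasDerivWithinAt μ (coad br x (μ t) + diamond ρ D (a t) - dcT dc D) s t ↔
      HasDerivWithinAt ν (coad br x (ν t)) s t := by
  have hB := (hv.diamond ρ ha).sub (hv.dcT dc)
  have hνB : ∀ y, ν y = μ y - (diamond ρ (v y) (a y) - dcT dc (v y)) := fun y => by
    rw [hνμ]; abel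
  have hμB : ∀ y, μ y = ν y + (diamond ρ (v y) (a y) - dcT dc (v y)) := fun y => by
    rw [hνB]; abel
  subst hvD
  obtain rfl : a' = -(dAct ρ x (a t) + dc x) :=
    eq_neg_of_add_eq_zero_left ((add_assoc _ _ _).symm.trans hadv)
  have halg : coad br x (μ t) + diamond ρ (v' + ρ x (v t)) (a t) - dcT dc (v' + ρ x (v t)) =
      coad br x (ν t) + (diamond ρ (v t) (-(dAct ρ x (a t) + dc x)) + diamond ρ v' (a t) -
        dcT dc v') := by
    ext y
    simp only [coad, diamond, map_add, dcT, sub_apply, add_apply, ContinuousLinearMap.comp_apply,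
      LinearMap.coe_toContinuousLinearMap', LinearMap.coe_mk, AddHom.coe_mk, hνμ,
      ContinuousLinearMap.add_comp, ContinuousLinearMap.sub_comp, dAct, neg_add_rev, neg_neg,
      neg_apply, hρ, map_sub, hdc, sub_neg_eq_add]
    ring
  rw [halg]
  exact ⟨fun h => ((h.sub hB).congr (fun y _ => hνB y) (hνB t)).congr_deriv
      (add_sub_cancel_right _ _),
    fun h => (h.add hB).congr (fun y _ => hμB y) (hμB t)⟩

end Clebsch

theorem clebsch_variational_principle_general
    (br : g →ₗ[ℝ] g →ₗ[ℝ] g)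
    (ρ : g →ₗ[ℝ] V →L[ℝ] V)
    (hρ : ∀ x y : g, ρ (br x y) = (ρ x).comp (ρ y) - (ρ y).comp (ρ x))
    (dc : g →ₗ[ℝ] (V →L[ℝ] ℝ))
    (hdc : ∀ x y : g, dc (br x y) = dAct ρ x (dc y) - dAct ρ y (dc x))
    (l : g × (V →L[ℝ] ℝ) → ℝ) (hl : ContDiff ℝ 1 l)
    (D1 : g × (V →L[ℝ] ℝ) → (g →L[ℝ] ℝ)) (D2 : g × (V →L[ℝ] ℝ) → V)
    (hD : ∀ p : g × (V →L[ℝ] ℝ),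
      HasFDerivAt l
        ((D1 p).comp (ContinuousLinearMap.fst ℝ g (V →L[ℝ] ℝ)) +
          (ContinuousLinearMap.apply ℝ ℝ (D2 p)).comp
            (ContinuousLinearMap.snd ℝ g (V →L[ℝ] ℝ))) p)
    (t₀ t₁ : ℝ) (ht : t₀ < t₁)
    (ξ : ℝ → g) (a : ℝ → (V →L[ℝ] ℝ)) (v : ℝ → V)
    (hξ : ContinuousOn ξ (Set.Icc t₀ t₁))
    (ha : ContDiffOn ℝ 1 a (Set.Icc t₀ t₁))
    (hv : ContDiffOn ℝ 1 v (Set.Icc t₀ t₁))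
    (hD1 : ContDiffOn ℝ 1 (fun t => D1 (ξ t, a t)) (Set.Icc t₀ t₁)) :
    (∀ (η : ℝ → g) (da : ℝ → (V →L[ℝ] ℝ)) (dv : ℝ → V),
        ContDiffOn ℝ 1 η (Set.Icc t₀ t₁) →
        ContDiffOn ℝ 1 da (Set.Icc t₀ t₁) →
        ContDiffOn ℝ 1 dv (Set.Icc t₀ t₁) →
        η t₀ = 0 → η t₁ = 0 → da t₀ = 0 → da t₁ = 0 → dv t₀ = 0 → dv t₁ = 0 →
        (∫ t in t₀..t₁,
          ((D1 (ξ t, a t)) (derivWithin η (Set.Icc t₀ t₁) t + br (ξ t) (η t))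
            + (da t) (D2 (ξ t, a t))
            + (derivWithin da (Set.Icc t₀ t₁) t
                + dAct ρ (derivWithin η (Set.Icc t₀ t₁) t + br (ξ t) (η t)) (a t)
                + dAct ρ (ξ t) (da t)
                + dc (derivWithin η (Set.Icc t₀ t₁) t + br (ξ t) (η t))) (v t)
            + (derivWithin a (Set.Icc t₀ t₁) t + dAct ρ (ξ t) (a t) + dc (ξ t))
                (dv t))) = 0) ↔
      (∀ t ∈ Set.Icc t₀ t₁,
        (derivWithin a (Set.Icc t₀ t₁) t + dAct ρ (ξ t) (a t) + dc (ξ t) = 0) ∧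
        (derivWithin v (Set.Icc t₀ t₁) t + ρ (ξ t) (v t) = D2 (ξ t, a t)) ∧
        HasDerivWithinAt (fun s => D1 (ξ s, a s))
          (coad br (ξ t) (D1 (ξ t, a t)) + diamond ρ (D2 (ξ t, a t)) (a t)
            - dcT dc (D2 (ξ t, a t)))
          (Set.Icc t₀ t₁) t) := by
  set ν := fun t => D1 (ξ t, a t) - diamond ρ (v t) (a t) + dcT dc (v t)
  have hνμ : ∀ t, ν t = D1 (ξ t, a t) - diamond ρ (v t) (a t) + dcT dc (v t) := fun _ => rfl
  have hν : ContDiffOn ℝ 1 ν (Icc t₀ t₁) := (hD1.sub (hv.diamond ρ ha)).add (hv.dcT dc)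
  have hD2 : ContinuousOn (fun t => D2 (ξ t, a t)) (Icc t₀ t₁) :=
    (continuous_of_hasFDerivAt_eq_add_apply_snd hl hD).comp_continuousOn
      (hξ.prodMk ha.continuousOn)
  refine (forall_integral_clebschVariation_eq_zero_iff ht hνμ hν hD2 hξ ha hv).trans
    (forall₂_congr fun t htI => ?_)
  have hEP := hasDerivWithinAt_affineEulerPoincare_iff (x := ξ t) (D := D2 (ξ t, a t)) hρ hdc hνμ
    (ha.hasDerivWithinAt htI) (hv.hasDerivWithinAt htI)
  rw [sub_eq_zero, ContinuousLinearMap.apply_eq_zero_iff,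
    sub_eq_zero, eq_comm (a := D2 _)]
  constructor
  · rintro ⟨hcoad, hvD, hadv⟩
    exact ⟨hadv, hvD, (hEP hadv hvD).2 ((hν.hasDerivWithinAt htI).congr_deriv hcoad.symm)⟩
  · rintro ⟨hadv, hvD, hμ⟩
    exact ⟨(((hEP hadv hvD).1 hμ).derivWithin (uniqueDiffOn_Icc ht t htI)).symm, hvD, hadv⟩

/-- **Clebsch-constrained variational principle for the affine
Euler–Poincaré equations.** The first variation of the Clebsch action
vanishes for all variations `δξ = η′ + [ξ,η]` (with `η` vanishing at the
endpoints) and free variations `δa`, `δv` vanishing at the endpoints iff the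
advection equation `a′ + ξa + dc(ξ) = 0`, the equation `v′ + ξv = D₂l(ξ,a)`,
and the affine Euler–Poincaré equation
`(d/dt) D₁l = ad*_ξ D₁l + D₂l ⋄ a − dc^T(D₂l)` hold on `[t₀,t₁]`. -/
theorem clebsch_variational_principle
    (br : g →ₗ[ℝ] g →ₗ[ℝ] g)
    (hbr : ∀ x : g, br x x = 0)
    (hjac : ∀ x y z : g, br x (br y z) + br y (br z x) + br z (br x y) = 0)
    (ρ : g →ₗ[ℝ] V →L[ℝ] V)
    (hρ : ∀ x y : g, ρ (br x y) = (ρ x).comp (ρ y) - (ρ y).comp (ρ x))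
    (dc : g →ₗ[ℝ] (V →L[ℝ] ℝ))
    (hdc : ∀ x y : g, dc (br x y) = dAct ρ x (dc y) - dAct ρ y (dc x))
    (l : g × (V →L[ℝ] ℝ) → ℝ) (hl : ContDiff ℝ 1 l)
    (D1 : g × (V →L[ℝ] ℝ) → (g →L[ℝ] ℝ)) (D2 : g × (V →L[ℝ] ℝ) → V)
    (hD : ∀ p : g × (V →L[ℝ] ℝ),
      HasFDerivAt l
        ((D1 p).comp (ContinuousLinearMap.fst ℝ g (V →L[ℝ] ℝ)) +
          (ContinuousLinearMap.apply ℝ ℝ (D2 p)).comp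
            (ContinuousLinearMap.snd ℝ g (V →L[ℝ] ℝ))) p)
    (t₀ t₁ : ℝ) (ht : t₀ < t₁)
    (ξ : ℝ → g) (a : ℝ → (V →L[ℝ] ℝ)) (v : ℝ → V)
    (hξ : ContinuousOn ξ (Set.Icc t₀ t₁))
    (ha : ContDiffOn ℝ 1 a (Set.Icc t₀ t₁))
    (hv : ContDiffOn ℝ 1 v (Set.Icc t₀ t₁))
    (hD1 : ContDiffOn ℝ 1 (fun t => D1 (ξ t, a t)) (Set.Icc t₀ t₁)) :
    (∀ (η : ℝ → g) (da : ℝ → (V →L[ℝ] ℝ)) (dv : ℝ → V),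
        ContDiffOn ℝ 1 η (Set.Icc t₀ t₁) →
        ContDiffOn ℝ 1 da (Set.Icc t₀ t₁) →
        ContDiffOn ℝ 1 dv (Set.Icc t₀ t₁) →
        η t₀ = 0 → η t₁ = 0 → da t₀ = 0 → da t₁ = 0 → dv t₀ = 0 → dv t₁ = 0 →
        (∫ t in t₀..t₁,
          ((D1 (ξ t, a t)) (derivWithin η (Set.Icc t₀ t₁) t + br (ξ t) (η t))
            + (da t) (D2 (ξ t, a t))
            + (derivWithin da (Set.Icc t₀ t₁) t
                + dAct ρ (derivWithin η (Set.Icc t₀ t₁) t + br (ξ t) (η t)) (a t)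
                + dAct ρ (ξ t) (da t)
                + dc (derivWithin η (Set.Icc t₀ t₁) t + br (ξ t) (η t))) (v t)
            + (derivWithin a (Set.Icc t₀ t₁) t + dAct ρ (ξ t) (a t) + dc (ξ t))
                (dv t))) = 0) ↔
      (∀ t ∈ Set.Icc t₀ t₁,
        (derivWithin a (Set.Icc t₀ t₁) t + dAct ρ (ξ t) (a t) + dc (ξ t) = 0) ∧
        (derivWithin v (Set.Icc t₀ t₁) t + ρ (ξ t) (v t) = D2 (ξ t, a t)) ∧
        HasDerivWithinAt (fun s => D1 (ξ s, a s))
          (coad br (ξ t) (D1 (ξ t, a t)) + diamond ρ (D2 (ξ t, a t)) (a t)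
            - dcT dc (D2 (ξ t, a t)))
          (Set.Icc t₀ t₁) t) :=
  clebsch_variational_principle_general br ρ hρ dc hdc l hl D1 D2 hD t₀ t₁ ht ξ a v hξ ha hv hD1
end

section
/- Let U ⊆ ℝ^d be open, ν : ℝ × U → ℝ^m smooth and γ_1, …, γ_d : ℝ × U → ℝ^m smooth with ∂_t γ_i = ∂_i ν for every i (the abelian advection equation). Let σ : [0,1] → U be a C¹ closed curve, σ(0) = σ(1). Then the loop integral t ↦ ∫_0^1 Σ_{i=1}^d γ_i(t, σ(s)) σ_i′(s) ds is constant in t. -/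
/- Setup: maps on ℝ × ℝ^d (time × space) with values in the abelian Lie
algebra ℝ^m; ∂_t is the derivative in the time direction (1,0) and ∂_i the
derivative in the i-th spatial direction (0, e_i); σ is a C¹ closed loop in U
and ∮_σ γ = ∫₀¹ Σ_i γ_i(t,σ(s)) σ_i′(s) ds the line integral of the one-form γ
around σ. -/

variable {d m : ℕ}

/-- Time derivative `∂_t f` of a map on `ℝ × ℝ^d`. -/
noncomputable def pt (f : ℝ × (Fin d → ℝ) → (Fin m → ℝ))
    (p : ℝ × (Fin d → ℝ)) : Fin m → ℝ :=
  fderiv ℝ f p (1, 0)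

/-- Spatial derivative `∂_i f` of a map on `ℝ × ℝ^d`. -/
noncomputable def px (i : Fin d) (f : ℝ × (Fin d → ℝ) → (Fin m → ℝ))
    (p : ℝ × (Fin d → ℝ)) : Fin m → ℝ :=
  fderiv ℝ f p (0, Pi.single i 1)

open MeasureTheory Set intervalIntegral

set_option maxHeartbeats 2000000 in
/-- If `∂_t γ_i = ∂_i ν` on ℝ × U (abelian advection
equation) and `σ : [0,1] → U` is a C¹ closed curve, then the loop integral
`t ↦ ∫₀¹ Σ_i γ_i(t, σ(s)) σ_i′(s) ds` is constant in `t`. -/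
theorem abelian_loop_integral_constant
    (U : Set (Fin d → ℝ)) (hU : IsOpen U)
    (ν : ℝ × (Fin d → ℝ) → (Fin m → ℝ))
    (γ : Fin d → ℝ × (Fin d → ℝ) → (Fin m → ℝ))
    (hν : ContDiffOn ℝ (⊤ : ℕ∞) ν (Set.univ ×ˢ U))
    (hγ : ∀ i, ContDiffOn ℝ (⊤ : ℕ∞) (γ i) (Set.univ ×ˢ U))
    (hadv : ∀ i, ∀ p ∈ Set.univ ×ˢ U, pt (γ i) p = px i ν p)
    (σ : ℝ → (Fin d → ℝ))
    (hσ : ContDiffOn ℝ 1 σ (Set.Icc 0 1))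
    (hσU : ∀ s ∈ Set.Icc (0:ℝ) 1, σ s ∈ U)
    (hclosed : σ 0 = σ 1) :
    ∀ t₁ t₂ : ℝ,
      (∫ s in (0:ℝ)..1, ∑ i, derivWithin σ (Set.Icc 0 1) s i • γ i (t₁, σ s))
        = ∫ s in (0:ℝ)..1, ∑ i, derivWithin σ (Set.Icc 0 1) s i • γ i (t₂, σ s) := by
  -- Notation
  set S : Set ℝ := Set.Icc 0 1 with hS
  set P : Set (ℝ × (Fin d → ℝ)) := Set.univ ×ˢ U with hPdef
  have hP : IsOpen P := isOpen_univ.prod hU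
  have hmem : ∀ (t : ℝ), ∀ s ∈ S, (t, σ s) ∈ P := fun t s hs => ⟨trivial, hσU s hs⟩
  have hνdiff : ∀ p ∈ P, DifferentiableAt ℝ ν p := fun p hp =>
    (hν.contDiffAt (hP.mem_nhds hp)).differentiableAt (by simp)
  have hγdiff : ∀ i, ∀ p ∈ P, DifferentiableAt ℝ (γ i) p := fun i p hp =>
    ((hγ i).contDiffAt (hP.mem_nhds hp)).differentiableAt (by simp)
  -- continuity of the spatial derivatives of ν
  have hνfc : ContinuousOn (fderiv ℝ ν) P := hν.continuousOn_fderiv_of_isOpen hP (by simp)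
  have hpx : ∀ i, ContinuousOn (px i ν) P := fun i =>
    hνfc.clm_apply continuousOn_const
  -- continuity of σ and its derivative
  have hσc : ContinuousOn σ S := hσ.continuousOn
  have hσ'c : ContinuousOn (derivWithin σ S) S :=
    hσ.continuousOn_derivWithin (uniqueDiffOn_Icc one_pos) le_rfl
  -- the key integrand G
  set G : ℝ → ℝ → (Fin m → ℝ) :=
    fun t s => ∑ i, derivWithin σ S s i • px i ν (t, σ s) with hGdef
  -- G is continuous on univ ×ˢ S (as a function of (t,s))
  have hmap : ∀ q : ℝ × ℝ, q ∈ (Set.univ ×ˢ S : Set (ℝ × ℝ)) → (q.1, σ q.2) ∈ P :=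
    fun q hq => hmem q.1 q.2 hq.2
  have hΦc : ContinuousOn (fun q : ℝ × ℝ => (q.1, σ q.2)) (Set.univ ×ˢ S) :=
    continuousOn_fst.prodMk (hσc.comp continuousOn_snd fun q hq => hq.2)
  have hGc : ContinuousOn (fun q : ℝ × ℝ => G q.1 q.2) (Set.univ ×ˢ S) := by
    apply continuousOn_finset_sum
    intro i _
    have h1 : ContinuousOn (fun q : ℝ × ℝ => derivWithin σ S q.2)
        (Set.univ ×ˢ S) := hσ'c.comp continuousOn_snd fun q hq => hq.2
    have h2 : ContinuousOn (fun q : ℝ × ℝ => derivWithin σ S q.2 i)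
        (Set.univ ×ˢ S) := (continuous_apply i).comp_continuousOn h1
    have h3 : ContinuousOn (fun q : ℝ × ℝ => px i ν (q.1, σ q.2))
        (Set.univ ×ˢ S) := (hpx i).comp hΦc hmap
    exact h2.smul h3
  -- slices of G are continuous
  have hGct : ∀ t, ContinuousOn (fun s => G t s) S := by
    intro t
    exact hGc.comp ((continuous_const.prodMk continuous_id).continuousOn)
      (fun s hs => ⟨trivial, hs⟩)
  have hGcs : ∀ s ∈ S, Continuous (fun t => G t s) := by
    intro s hs
    rw [← continuousOn_univ]
    exact hGc.comp ((continuous_id.prodMk continuous_const).continuousOn)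
      (fun t _ => ⟨trivial, hs⟩)
  -- the loop integrand g
  set g : ℝ → ℝ → (Fin m → ℝ) :=
    fun t s => ∑ i, derivWithin σ S s i • γ i (t, σ s) with hgdef
  have hgc : ∀ t, ContinuousOn (fun s => g t s) S := by
    intro t
    apply continuousOn_finset_sum
    intro i _
    refine (((continuous_apply i).comp_continuousOn hσ'c)).smul ?_
    exact (hγ i).continuousOn.comp
      (continuousOn_const.prodMk hσc)
      (fun s hs => hmem t s hs)
  -- Step 1: FTC in t
  have hstep1 : ∀ a b : ℝ, ∀ s ∈ S,
      (∫ t in a..b, G t s) = g b s - g a s := by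
    intro a b s hs
    apply intervalIntegral.integral_eq_sub_of_hasDerivAt
    · intro t _
      have hp : (t, σ s) ∈ P := hmem t s hs
      have h1 : HasDerivAt (fun t : ℝ => (t, σ s)) ((1 : ℝ), (0 : Fin d → ℝ)) t :=
        (hasDerivAt_id t).prodMk (hasDerivAt_const t (σ s))
      have hder : HasDerivAt (fun t => g t s)
          (∑ i, derivWithin σ S s i • pt (γ i) (t, σ s)) t := by
        apply HasDerivAt.fun_sum
        intro i _
        exact ((hγdiff i _ hp).hasFDerivAt.comp_hasDerivAt t h1).const_smul (derivWithin σ S s i)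
      have heq : (∑ i, derivWithin σ S s i • pt (γ i) (t, σ s)) = G t s :=
        Finset.sum_congr rfl fun i _ => by rw [hadv i _ hp]
      rwa [heq] at hder
    · exact ((hGcs s hs).intervalIntegrable _ _)
  -- Step 4: the inner s-integral of G vanishes
  have hstep4 : ∀ t : ℝ, (∫ s in (0:ℝ)..1, G t s) = 0 := by
    intro t
    have hcont : ContinuousOn (fun s => ν (t, σ s)) S :=
      hν.continuousOn.comp
        (continuousOn_const.prodMk hσc)
        (fun s hs => hmem t s hs)
    have hderiv : ∀ s ∈ Set.Ioo (0:ℝ) 1,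
        HasDerivWithinAt (fun s => ν (t, σ s)) (G t s) (Set.Ioi s) s := by
      intro s hs
      have hsS : s ∈ S := Set.mem_Icc.2 ⟨hs.1.le, hs.2.le⟩
      have hp : (t, σ s) ∈ P := hmem t s hsS
      have hnhds : S ∈ nhds s := Icc_mem_nhds hs.1 hs.2
      have hdσ : DifferentiableAt ℝ σ s :=
        ((hσ.differentiableOn one_ne_zero) s hsS).differentiableAt hnhds
      have hσd : HasDerivAt σ (derivWithin σ S s) s := by
        rw [derivWithin_of_mem_nhds hnhds]
        exact hdσ.hasDerivAt
      have hΦ : HasDerivAt (fun s : ℝ => (t, σ s))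
          ((0 : ℝ), derivWithin σ S s) s :=
        (hasDerivAt_const s t).prodMk hσd
      have hcomp : HasDerivAt (fun s => ν (t, σ s))
          (fderiv ℝ ν (t, σ s) ((0 : ℝ), derivWithin σ S s)) s :=
        (hνdiff _ hp).hasFDerivAt.comp_hasDerivAt s hΦ
      have hv : ((0 : ℝ), derivWithin σ S s)
          = ∑ i, derivWithin σ S s i • ((0 : ℝ), (Pi.single i 1 : Fin d → ℝ)) := by
        apply Prod.ext
        · rw [Prod.fst_sum]; simp
        · rw [Prod.snd_sum]
          simp only [Prod.smul_mk]
          funext j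
          simp [Finset.sum_apply, Pi.single_apply]
      have hlin : fderiv ℝ ν (t, σ s) ((0 : ℝ), derivWithin σ S s) = G t s := by
        rw [hv, map_sum]
        exact Finset.sum_congr rfl fun i _ => by
          rw [(fderiv ℝ ν (t, σ s)).map_smul]; rfl
      rw [hlin] at hcomp
      exact hcomp.hasDerivWithinAt
    have hint : IntervalIntegrable (fun s => G t s) volume 0 1 :=
      (hGct t).intervalIntegrable_of_Icc zero_le_one
    rw [intervalIntegral.integral_eq_sub_of_hasDeriv_right_of_le zero_le_one hcont hderiv hint,
      hclosed, sub_self]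
  -- Key claim for ordered endpoints
  have key : ∀ a b : ℝ, a ≤ b →
      (∫ s in (0:ℝ)..1, g b s) - (∫ s in (0:ℝ)..1, g a s) = 0 := by
    intro a b hab
    have hSu : Set.uIcc (0:ℝ) 1 = S := Set.uIcc_of_le zero_le_one
    have hinta : IntervalIntegrable (fun s => g a s) volume 0 1 :=
      (hgc a).intervalIntegrable_of_Icc zero_le_one
    have hintb : IntervalIntegrable (fun s => g b s) volume 0 1 :=
      (hgc b).intervalIntegrable_of_Icc zero_le_one
    have h1 : (∫ s in (0:ℝ)..1, g b s) - (∫ s in (0:ℝ)..1, g a s)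
        = ∫ s in (0:ℝ)..1, (g b s - g a s) :=
      (intervalIntegral.integral_sub hintb hinta).symm
    have h2 : (∫ s in (0:ℝ)..1, (g b s - g a s))
        = ∫ s in (0:ℝ)..1, ∫ t in a..b, G t s := by
      apply intervalIntegral.integral_congr
      intro s hs
      exact (hstep1 a b s (hSu ▸ hs)).symm
    -- Fubini
    have hF : ContinuousOn (Function.uncurry fun s t => G t s)
        ((Set.Icc (0:ℝ) 1) ×ˢ (Set.Icc a b)) := by
      have : ContinuousOn (fun q : ℝ × ℝ => G q.2 q.1)
          ((Set.Icc (0:ℝ) 1) ×ˢ (Set.Icc a b)) :=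
        hGc.comp (continuous_swap.continuousOn) (fun q hq => ⟨trivial, hq.1⟩)
      exact this
    have hIntOn : IntegrableOn (Function.uncurry fun s t => G t s)
        ((Set.Ioc (0:ℝ) 1) ×ˢ (Set.Ioc a b)) (volume.prod volume) :=
      (hF.integrableOn_compact (isCompact_Icc.prod isCompact_Icc)).mono_set
        (Set.prod_mono Set.Ioc_subset_Icc_self Set.Ioc_subset_Icc_self)
    have hInt : Integrable (Function.uncurry fun s t => G t s)
        ((volume.restrict (Set.Ioc (0:ℝ) 1)).prod (volume.restrict (Set.Ioc a b))) := by
      rwa [Measure.prod_restrict]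
    have hswap := MeasureTheory.integral_integral_swap hInt
    have h3 : (∫ s in (0:ℝ)..1, ∫ t in a..b, G t s)
        = ∫ t in Set.Ioc a b, ∫ s in Set.Ioc (0:ℝ) 1, G t s := by
      rw [intervalIntegral.integral_of_le (zero_le_one (α := ℝ))]
      simp only [intervalIntegral.integral_of_le hab]
      exact hswap
    have h4 : (∫ t in Set.Ioc a b, ∫ s in Set.Ioc (0:ℝ) 1, G t s) = 0 := by
      have : ∀ t : ℝ, (∫ s in Set.Ioc (0:ℝ) 1, G t s) = 0 := fun t => by
        rw [← intervalIntegral.integral_of_le (zero_le_one (α := ℝ))]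
        exact hstep4 t
      simp [this]
    rw [h1, h2, h3, h4]
  intro t₁ t₂
  rcases le_total t₁ t₂ with h | h
  · exact (sub_eq_zero.mp (key t₁ t₂ h)).symm
  · exact sub_eq_zero.mp (key t₂ t₁ h)
end
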